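/- Let G be a weighted undirected graph with a finite set S of sites carrying additive weights ω, and suppose all additively weighted distances from sites to vertices are pairwise distinct (no ties). If a vertex v belongs to the Voronoi cell Vor(s) of site s, then every vertex z on a shortest path from s to v also belongs to Vor(s). -/

import Mathlib

/-- The total weight of a walk in a weighted graph: the sum of the weights of its edges. -/
def walkWeight {V : Type} {G : SimpleGraph V} (w : Sym2 V → ℝ) {a b : V} (p : G.Walk a b) : ℝ :=
  (p.edges.map w).sum

section WalkWeight

variable {V : Type} {G : SimpleGraph V} (w : Sym2 V → ℝ)

lemma walkWeight_append {a b c : V} (p : G.Walk a b) (q : G.Walk b c) :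
    walkWeight w (p.append q) = walkWeight w p + walkWeight w q := by
  simp [walkWeight, SimpleGraph.Walk.edges_append]

lemma dist_triangle_of_isLeast_walkWeight {dist : V → V → ℝ}
    (hdist : ∀ a b : V, IsLeast {x : ℝ | ∃ p : G.Walk a b, walkWeight w p = x} (dist a b))
    (a b c : V) : dist a c ≤ dist a b + dist b c := by
  obtain ⟨p, hp⟩ := (hdist a b).1
  obtain ⟨q, hq⟩ := (hdist b c).1
  rw [← hp, ← hq, ← walkWeight_append]
  exact (hdist a c).2 ⟨p.append q, rfl⟩

end WalkWeight

theorem stmt2_general {V : Type} (G : SimpleGraph V) (w : Sym2 V → ℝ)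
    (dist : V → V → ℝ)
    (hdist : ∀ a b : V, IsLeast {x : ℝ | ∃ p : G.Walk a b, walkWeight w p = x} (dist a b))
    (S : Finset V) (ω : V → ℝ)
    (s : V) (v z : V)
    (hv : ∀ t ∈ S, t ≠ s → ω s + dist s v < ω t + dist t v)
    (hz : dist s z + dist z v = dist s v) :
    ∀ t ∈ S, t ≠ s → ω s + dist s z < ω t + dist t z := by
  intro t ht hts
  by_contra! hlose
  have hvia_z : dist t v ≤ dist t z + dist z v :=
    dist_triangle_of_isLeast_walkWeight w hdist t z v
  -- `ω t + dist t v ≤ ω t + dist t z + dist z v ≤ ω s + dist s z + dist z v = ω s + dist s v`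
  linarith [hv t ht hts]

/-- If `v` belongs to the additively weighted Voronoi cell of a site `s`, then so does every
vertex `z` on a shortest path from `s` to `v`. -/
theorem stmt2 {V : Type} (G : SimpleGraph V) (w : Sym2 V → ℝ)
    (hw : ∀ e, 0 ≤ w e)
    (dist : V → V → ℝ)
    (hdist : ∀ a b : V, IsLeast {x : ℝ | ∃ p : G.Walk a b, walkWeight w p = x} (dist a b))
    (S : Finset V) (ω : V → ℝ) (hω : ∀ s ∈ S, 0 ≤ ω s)
    (hties : ∀ v : V, ∀ s ∈ S, ∀ t ∈ S, s ≠ t → ω s + dist s v ≠ ω t + dist t v)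
    (s : V) (hs : s ∈ S) (v z : V)
    (hv : ∀ t ∈ S, t ≠ s → ω s + dist s v < ω t + dist t v)
    (hz : dist s z + dist z v = dist s v) :
    ∀ t ∈ S, t ≠ s → ω s + dist s z < ω t + dist t z :=
  stmt2_general G w dist hdist S ω s v z hv hz
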